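/- For every integer n ≥ 5, the triple (x₁, x₁₂, x₁₃, x₂₃) = ((n−4)(n−1)²/(n³−2n²+n−4), (n−1)(n²−3n+4)/(n³−2n²+n−4), (n−1)(n²−3n+4)/(n³−2n²+n−4), 1) is a solution of the system g₁ = g₂ = g₃ = 0, where g₁ = n x₁²x₁₃² − 2n x₁x₁₂x₁₃² + n x₁₂²x₁₃² + x₁²x₁₂² − 2x₁²x₁₃² − x₁x₁₂³x₁₃ + x₁x₁₂x₁₃³ + 4x₁x₁₂x₁₃² + x₁x₁₂x₁₃ − 4x₁₂²x₁₃², g₂ = −n x₁x₁₃ + n x₁₂³ − 2n x₁₂²x₁₃ + n x₁₂x₁₃² + 2n x₁₂x₁₃ − n x₁₂ + 3x₁x₁₃ − x₁₂³ + 4x₁₂²x₁₃ − 3x₁₂x₁₃² − 4x₁₂x₁₃ + x₁₂, g₃ = n x₁x₁₂ − n x₁₂²x₁₃ + 2n x₁₂x₁₃² − 2n x₁₂x₁₃ − n x₁₃³ + n x₁₃ − 3x₁x₁₂ + 3x₁₂²x₁₃ − 4x₁₂x₁₃² + 4x₁₂x₁₃ + x₁₃³ − x₁₃. -/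

import Mathlib

/-!
On the diagonal `x₁₂ = x₁₃ = y` the system collapses: `g₂ = -g₃ = y · L(x, y)` for a line `L`
and `g₁ = y² · C(x, y)` for a conic `C`. The given point is a common zero of `L` and `C`, as one
checks by clearing the denominator `n³ - 2n² + n - 4 = n(n - 1)² - 4`, positive for `n ≥ 3`.
-/

/-- The polynomials `g₁, g₂, g₃` of the normalized system (with `x₂₃ = 1`). -/
def g₁ (n x₁ x₁₂ x₁₃ : ℝ) : ℝ :=
  n * x₁ ^ 2 * x₁₃ ^ 2 - 2 * n * x₁ * x₁₂ * x₁₃ ^ 2 + n * x₁₂ ^ 2 * x₁₃ ^ 2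
    + x₁ ^ 2 * x₁₂ ^ 2 - 2 * x₁ ^ 2 * x₁₃ ^ 2 - x₁ * x₁₂ ^ 3 * x₁₃
    + x₁ * x₁₂ * x₁₃ ^ 3 + 4 * x₁ * x₁₂ * x₁₃ ^ 2 + x₁ * x₁₂ * x₁₃
    - 4 * x₁₂ ^ 2 * x₁₃ ^ 2

def g₂ (n x₁ x₁₂ x₁₃ : ℝ) : ℝ :=
  -n * x₁ * x₁₃ + n * x₁₂ ^ 3 - 2 * n * x₁₂ ^ 2 * x₁₃ + n * x₁₂ * x₁₃ ^ 2
    + 2 * n * x₁₂ * x₁₃ - n * x₁₂ + 3 * x₁ * x₁₃ - x₁₂ ^ 3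
    + 4 * x₁₂ ^ 2 * x₁₃ - 3 * x₁₂ * x₁₃ ^ 2 - 4 * x₁₂ * x₁₃ + x₁₂

def g₃ (n x₁ x₁₂ x₁₃ : ℝ) : ℝ :=
  n * x₁ * x₁₂ - n * x₁₂ ^ 2 * x₁₃ + 2 * n * x₁₂ * x₁₃ ^ 2 - 2 * n * x₁₂ * x₁₃
    - n * x₁₃ ^ 3 + n * x₁₃ - 3 * x₁ * x₁₂ + 3 * x₁₂ ^ 2 * x₁₃
    - 4 * x₁₂ * x₁₃ ^ 2 + 4 * x₁₂ * x₁₃ + x₁₃ ^ 3 - x₁₃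

def diagLine (n x y : ℝ) : ℝ := (2 * n - 4) * y - (n - 3) * x - (n - 1)

def diagConic (n x y : ℝ) : ℝ := (n - 1) * x ^ 2 - (2 * n - 4) * x * y + (n - 4) * y ^ 2 + x

section Diagonal

variable (n x y : ℝ)

theorem g₁_diag : g₁ n x y y = y ^ 2 * diagConic n x y := by
  unfold g₁ diagConic; ring

theorem g₂_diag : g₂ n x y y = y * diagLine n x y := by
  unfold g₂ diagLine; ring

theorem g₃_diag : g₃ n x y y = -g₂ n x y y := by
  unfold g₃ g₂; ring

end Diagonal

theorem diagLine_point {n : ℝ} (hD : n ^ 3 - 2 * n ^ 2 + n - 4 ≠ 0) :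
    diagLine n ((n - 4) * (n - 1) ^ 2 / (n ^ 3 - 2 * n ^ 2 + n - 4))
      ((n - 1) * (n ^ 2 - 3 * n + 4) / (n ^ 3 - 2 * n ^ 2 + n - 4)) = 0 := by
  unfold diagLine
  -- `field_simp` would otherwise rewrite the denominator out of the shape of `hD`
  generalize hE : n ^ 3 - 2 * n ^ 2 + n - 4 = D at hD
  field_simp
  subst hE
  ring

theorem diagConic_point {n : ℝ} (hD : n ^ 3 - 2 * n ^ 2 + n - 4 ≠ 0) :
    diagConic n ((n - 4) * (n - 1) ^ 2 / (n ^ 3 - 2 * n ^ 2 + n - 4))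
      ((n - 1) * (n ^ 2 - 3 * n + 4) / (n ^ 3 - 2 * n ^ 2 + n - 4)) = 0 := by
  unfold diagConic
  generalize hE : n ^ 3 - 2 * n ^ 2 + n - 4 = D at hD
  field_simp
  subst hE
  ring

theorem cubic_denom_pos {n : ℝ} (hn : 3 ≤ n) : 0 < n ^ 3 - 2 * n ^ 2 + n - 4 := by
  -- `n³ - 2n² + n - 4 = (n - 3)(n - 1)² + 3(n - 1)² - 4`
  nlinarith [mul_nonneg (sub_nonneg.2 hn) (sq_nonneg (n - 1))]

theorem rational_solution_of_system (n : ℤ) (hn : 5 ≤ n) :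
    0 < (n : ℝ) ^ 3 - 2 * (n : ℝ) ^ 2 + (n : ℝ) - 4 ∧
    g₁ (n : ℝ) (((n : ℝ) - 4) * ((n : ℝ) - 1) ^ 2 / ((n : ℝ) ^ 3 - 2 * (n : ℝ) ^ 2 + (n : ℝ) - 4))
        (((n : ℝ) - 1) * ((n : ℝ) ^ 2 - 3 * (n : ℝ) + 4) / ((n : ℝ) ^ 3 - 2 * (n : ℝ) ^ 2 + (n : ℝ) - 4))
        (((n : ℝ) - 1) * ((n : ℝ) ^ 2 - 3 * (n : ℝ) + 4) / ((n : ℝ) ^ 3 - 2 * (n : ℝ) ^ 2 + (n : ℝ) - 4)) = 0 ∧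
    g₂ (n : ℝ) (((n : ℝ) - 4) * ((n : ℝ) - 1) ^ 2 / ((n : ℝ) ^ 3 - 2 * (n : ℝ) ^ 2 + (n : ℝ) - 4))
        (((n : ℝ) - 1) * ((n : ℝ) ^ 2 - 3 * (n : ℝ) + 4) / ((n : ℝ) ^ 3 - 2 * (n : ℝ) ^ 2 + (n : ℝ) - 4))
        (((n : ℝ) - 1) * ((n : ℝ) ^ 2 - 3 * (n : ℝ) + 4) / ((n : ℝ) ^ 3 - 2 * (n : ℝ) ^ 2 + (n : ℝ) - 4)) = 0 ∧
    g₃ (n : ℝ) (((n : ℝ) - 4) * ((n : ℝ) - 1) ^ 2 / ((n : ℝ) ^ 3 - 2 * (n : ℝ) ^ 2 + (n : ℝ) - 4))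
        (((n : ℝ) - 1) * ((n : ℝ) ^ 2 - 3 * (n : ℝ) + 4) / ((n : ℝ) ^ 3 - 2 * (n : ℝ) ^ 2 + (n : ℝ) - 4))
        (((n : ℝ) - 1) * ((n : ℝ) ^ 2 - 3 * (n : ℝ) + 4) / ((n : ℝ) ^ 3 - 2 * (n : ℝ) ^ 2 + (n : ℝ) - 4)) = 0 := by
  have hD := cubic_denom_pos (n := n) (by exact_mod_cast (by omega : (3 : ℤ) ≤ n))
  refine ⟨hD, ?_, ?_, ?_⟩
  · rw [g₁_diag, diagConic_point hD.ne', mul_zero]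
  · rw [g₂_diag, diagLine_point hD.ne', mul_zero]
  · rw [g₃_diag, g₂_diag, diagLine_point hD.ne', mul_zero, neg_zero]
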